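/- Let H be a connected finite simple graph of girth g(H) ≥ 5 and minimum degree δ(H) ≥ 3, and let k be an integer with 1 ≤ k ≤ C(K_1 + H). Then adim_k(K_1 + H) = adim_k(H). -/

import Mathlib

open Finset

namespace AdjDim

noncomputable section
open Classical

variable {V W : Type*}

/-- Truncated distance `d_{G,2}(x,y) = min(d_G(x,y), 2)`:
`0` if `x = y`, `1` if `x` and `y` are adjacent, and `2` otherwise. -/
def d2 (G : SimpleGraph V) (x y : V) : ℕ :=
  if x = y then 0 else if G.Adj x y then 1 else 2

/-- `S` is a `k`-adjacency generator for `G`: every pair of distinct vertices is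
distinguished (w.r.t. `d_{G,2}`) by at least `k` vertices of `S`. -/
def IsKAdjGen (G : SimpleGraph V) [Fintype V] (k : ℕ) (S : Finset V) : Prop :=
  ∀ x y : V, x ≠ y → k ≤ (S.filter (fun w => d2 G x w ≠ d2 G y w)).card

/-- The `k`-adjacency dimension of `G`: the minimum cardinality of a
`k`-adjacency generator. -/
def adim (G : SimpleGraph V) [Fintype V] (k : ℕ) : ℕ :=
  sInf {n | ∃ S : Finset V, IsKAdjGen G k S ∧ S.card = n}

/-- `B` is a `k`-adjacency basis of `G`: a `k`-adjacency generator of minimum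
cardinality. -/
def IsKAdjBasis (G : SimpleGraph V) [Fintype V] (k : ℕ) (B : Finset V) : Prop :=
  IsKAdjGen G k B ∧ B.card = adim G k

/-- `G` is `k`-adjacency dimensional: `k` is the largest integer for which a
`k`-adjacency generator exists. -/
def IsKAdjDimensional (G : SimpleGraph V) [Fintype V] (k : ℕ) : Prop :=
  (∃ S : Finset V, IsKAdjGen G k S) ∧
    ∀ k' : ℕ, k < k' → ¬ ∃ S : Finset V, IsKAdjGen G k' S

/-- `C_G(x,y)`: the set of vertices distinguishing `x` and `y` w.r.t. `d_{G,2}`. -/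
def CSet (G : SimpleGraph V) [Fintype V] (x y : V) : Finset V :=
  univ.filter (fun z => d2 G x z ≠ d2 G y z)

/-- `C(G) = min_{x ≠ y} |C_G(x,y)|`. -/
def Cmin (G : SimpleGraph V) [Fintype V] : ℕ :=
  sInf {m | ∃ x y : V, x ≠ y ∧ (CSet G x y).card = m}

/-- `C_k(G)`: the union of the sets `C_G(x,y)` over pairs of distinct vertices
with `|C_G(x,y)| = k`. -/
def Ck (G : SimpleGraph V) [Fintype V] (k : ℕ) : Finset V :=
  univ.filter (fun z => ∃ x y : V, x ≠ y ∧ (CSet G x y).card = k ∧ z ∈ CSet G x y)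

/-- Two distinct vertices `x, y` are twins: every other vertex is at the same
truncated distance from both. -/
def Twins (G : SimpleGraph V) (x y : V) : Prop :=
  x ≠ y ∧ ∀ z : V, z ≠ x → z ≠ y → d2 G x z = d2 G y z

/-- The join `G + H` of two vertex-disjoint graphs. -/
def join (G : SimpleGraph V) (H : SimpleGraph W) : SimpleGraph (V ⊕ W) where
  Adj x y :=
    match x, y with
    | Sum.inl a, Sum.inl b => G.Adj a b
    | Sum.inr a, Sum.inr b => H.Adj a b
    | Sum.inl _, Sum.inr _ => True
    | Sum.inr _, Sum.inl _ => True
  symm := by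
    constructor
    rintro (a | a) (b | b) h
    · exact G.adj_symm h
    · trivial
    · trivial
    · exact H.adj_symm h
  loopless := by
    constructor
    rintro (a | a) h
    · exact G.irrefl h
    · exact H.irrefl h

/-- `K_1 + H`: the join of a one-vertex graph with `H`, i.e. `H` together with a
new universal vertex. -/
def K1join (H : SimpleGraph W) : SimpleGraph (Unit ⊕ W) :=
  join (⊥ : SimpleGraph Unit) H

/-!
A `k`-adjacency generator of `K₁ + H` restricts to one of `H`, since the apex is adjacent to all
of `H` and so distinguishes no two of its vertices. Conversely, a `k`-adjacency generator `B` of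
`H` is one of `K₁ + H` as soon as every vertex `y` of `H` has `k` non-neighbours in `B`: these are
exactly the vertices of `B` distinguishing `y` from the apex. When `g(H) ≥ 5` and `δ(H) ≥ 3`,
take a neighbour `u` of `y` and two further neighbours `v, v'` of `u`. No neighbour of `y`
distinguishes `v` from `v'`: `u` is adjacent to both, `v` and `v'` are not neighbours of `y`, and
any other neighbour of `y` adjacent to one of them would close a `4`-cycle. So the `k` vertices
of `B` distinguishing `v` from `v'` are non-neighbours of `y`. Finally `k ≤ C(K₁ + H)` makes
the whole vertex set a `k`-adjacency generator, so both dimensions are attained.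
-/

section Girth

variable {α : Type*} {G : SimpleGraph α} {a b c d : α}

lemma not_adj_of_four_le_girth (hg : 4 ≤ G.girth) (hab : G.Adj a b) (hbc : G.Adj b c) :
    ¬ G.Adj a c := fun hac => by
  have hcycle : (SimpleGraph.Walk.cons hab (.cons hbc (.cons hac.symm .nil))).IsCycle := by
    simp [SimpleGraph.Walk.isCycle_def, SimpleGraph.Walk.isTrail_def, hab.ne, hbc.ne, hac.ne,
      hab.ne', hac.ne']
  have := SimpleGraph.girth_le_length hcycle
  simp only [SimpleGraph.Walk.length_cons, SimpleGraph.Walk.length_nil] at this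
  omega

lemma not_adj_of_five_le_girth (hg : 5 ≤ G.girth) (hab : G.Adj a b) (hbc : G.Adj b c)
    (hcd : G.Adj c d) (hac : a ≠ c) (hbd : b ≠ d) : ¬ G.Adj a d := fun had => by
  have hcycle :
      (SimpleGraph.Walk.cons hab (.cons hbc (.cons hcd (.cons had.symm .nil)))).IsCycle := by
    simp [SimpleGraph.Walk.isCycle_def, SimpleGraph.Walk.isTrail_def, hab.ne, hbc.ne, hcd.ne,
      had.ne, hab.ne', had.ne', hac, hbd, hac.symm]
  have := SimpleGraph.girth_le_length hcycle
  simp only [SimpleGraph.Walk.length_cons, SimpleGraph.Walk.length_nil] at this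
  omega

end Girth

section TruncatedDistance

variable {G : SimpleGraph V} {x y z u v v' : V}

lemma d2_of_adj (h : G.Adj x y) : d2 G x y = 1 := by
  rw [d2, if_neg h.ne, if_pos h]

lemma d2_of_not_adj (hne : x ≠ y) (h : ¬ G.Adj x y) : d2 G x y = 2 := by
  rw [d2, if_neg hne, if_neg h]

lemma d2_eq_one_iff : d2 G x y = 1 ↔ G.Adj x y := by
  unfold d2
  split_ifs with hxy hadj <;> simp_all

lemma d2_eq_two_of_five_le_girth (hg : 5 ≤ G.girth) (hvu : G.Adj v u) (huy : G.Adj u y)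
    (hyz : G.Adj y z) (hvy : v ≠ y) (huz : u ≠ z) : d2 G v z = 2 := by
  have hvz : v ≠ z := by
    rintro rfl
    exact not_adj_of_four_le_girth (by omega) hvu huy hyz.symm
  exact d2_of_not_adj hvz (not_adj_of_five_le_girth hg hvu huy hyz hvy huz)

lemma d2_eq_d2_of_adj_of_five_le_girth (hg : 5 ≤ G.girth) (hyu : G.Adj y u)
    (huv : G.Adj u v) (huv' : G.Adj u v') (hvy : v ≠ y) (hv'y : v' ≠ y) (hyz : G.Adj y z) :
    d2 G v z = d2 G v' z := by
  by_cases huz : u = z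
  · subst huz
    rw [d2_of_adj huv.symm, d2_of_adj huv'.symm]
  · rw [d2_eq_two_of_five_le_girth hg huv.symm hyu.symm hyz hvy huz,
      d2_eq_two_of_five_le_girth hg huv'.symm hyu.symm hyz hv'y huz]

end TruncatedDistance

lemma exists_adj_adj_ne_of_three_le_degree [Fintype V] {G : SimpleGraph V} [DecidableRel G.Adj]
    {u : V} (hu : 3 ≤ G.degree u) (y : V) :
    ∃ v v', G.Adj u v ∧ G.Adj u v' ∧ v ≠ v' ∧ v ≠ y ∧ v' ≠ y := by
  have h : 1 < #((G.neighborFinset u).erase y) := by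
    have := pred_card_le_card_erase (a := y) (s := G.neighborFinset u)
    rw [G.card_neighborFinset_eq_degree] at this
    omega
  obtain ⟨v, hv, v', hv', hvv'⟩ := one_lt_card.mp h
  simp only [mem_erase, SimpleGraph.mem_neighborFinset] at hv hv'
  exact ⟨v, v', hv.2, hv'.2, hvv', hv.1, hv'.1⟩

theorem IsKAdjGen.le_card_filter_d2_ne_one [Fintype V] {G : SimpleGraph V} [DecidableRel G.Adj]
    (hg : 5 ≤ G.girth) (hdeg : ∀ v, 3 ≤ G.degree v) {k : ℕ} {B : Finset V}
    (hB : IsKAdjGen G k B) (y : V) : k ≤ #(B.filter (fun z => d2 G y z ≠ 1)) := by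
  obtain ⟨u, hyu⟩ := (G.degree_pos_iff_exists_adj y).mp (by linarith [hdeg y])
  obtain ⟨v, v', huv, huv', hvv', hvy, hv'y⟩ := exists_adj_adj_ne_of_three_le_degree (hdeg u) y
  refine (hB v v' hvv').trans (card_le_card fun z hz => ?_)
  rw [mem_filter] at hz ⊢
  refine ⟨hz.1, fun hyz => hz.2 ?_⟩
  exact d2_eq_d2_of_adj_of_five_le_girth hg hyu huv huv' hvy hv'y (d2_eq_one_iff.mp hyz)

section Join

variable {G : SimpleGraph V} {H : SimpleGraph W}

lemma d2_join_inr_inr (a b : W) : d2 (join G H) (.inr a) (.inr b) = d2 H a b := by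
  simp only [d2, Sum.inr.injEq]
  rfl

lemma d2_join_inl_inr (a : V) (b : W) : d2 (join G H) (.inl a) (.inr b) = 1 :=
  d2_of_adj trivial

lemma d2_join_inr_inl (a : W) (b : V) : d2 (join G H) (.inr a) (.inl b) = 1 :=
  d2_of_adj trivial

lemma filter_d2_join_inr_inr [Fintype V] [Fintype W] (S : Finset (V ⊕ W)) (x y : W) :
    (S.filter fun w => d2 (join G H) (.inr x) w ≠ d2 (join G H) (.inr y) w) =
      (S.toRight.filter fun z => d2 H x z ≠ d2 H y z).map Function.Embedding.inr := by
  ext (a | z) <;> simp [d2_join_inr_inl, d2_join_inr_inr]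

theorem IsKAdjGen.toRight [Fintype V] [Fintype W] {k : ℕ} {S : Finset (V ⊕ W)}
    (hS : IsKAdjGen (join G H) k S) : IsKAdjGen H k S.toRight := fun x y hxy => by
  simpa [filter_d2_join_inr_inr] using hS (.inr x) (.inr y) (by simpa using hxy)

end Join

lemma _root_.Finset.toRight_map_inr {β : Type*} (t : Finset W) :
    (t.map (Function.Embedding.inr : W ↪ β ⊕ W)).toRight = t := by
  ext; simp

theorem IsKAdjGen.map_inr_K1join [Fintype W] {H : SimpleGraph W} {k : ℕ} {B : Finset W}
    (hB : IsKAdjGen H k B) (hnonadj : ∀ y, k ≤ #(B.filter fun z => d2 H y z ≠ 1)) :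
    IsKAdjGen (K1join H) k (B.map .inr) := by
  unfold K1join
  have hapex : ∀ y : W, (B.map .inr).filter (fun w =>
      d2 (join (⊥ : SimpleGraph Unit) H) (.inl ()) w ≠ d2 (join ⊥ H) (.inr y) w) =
        (B.filter fun z => d2 H y z ≠ 1).map .inr := by
    intro y
    ext (a | z) <;> simp [d2_join_inl_inr, d2_join_inr_inr, eq_comm]
  rintro (⟨⟩ | x) (⟨⟩ | y) hxy
  · exact absurd rfl hxy
  · simpa [hapex] using hnonadj y
  · simp_rw [ne_comm (a := d2 _ (Sum.inr x) _)]
    simpa [hapex] using hnonadj x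
  · simpa [filter_d2_join_inr_inr, toRight_map_inr] using hB x y (by simpa using hxy)

section Dimension

variable [Fintype V] {G : SimpleGraph V} {k : ℕ}

lemma adim_le_card {S : Finset V} (hS : IsKAdjGen G k S) : adim G k ≤ #S :=
  Nat.sInf_le ⟨S, hS, rfl⟩

lemma exists_isKAdjGen_card_eq_adim (h : ∃ S, IsKAdjGen G k S) :
    ∃ S, IsKAdjGen G k S ∧ #S = adim G k :=
  let ⟨S, hS⟩ := h
  Nat.sInf_mem (s := {n | ∃ S, IsKAdjGen G k S ∧ #S = n}) ⟨#S, S, hS, rfl⟩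

lemma isKAdjGen_univ_of_le_Cmin (hk : k ≤ Cmin G) : IsKAdjGen G k univ := fun x y hxy =>
  hk.trans (Nat.sInf_le ⟨x, y, hxy, rfl⟩)

end Dimension

theorem adim_K1join_eq_of_girth_general [Fintype W] (H : SimpleGraph W)
    [DecidableRel H.Adj] (hgirth : 5 ≤ H.girth)
    (hdeg : ∀ v : W, 3 ≤ H.degree v) (k : ℕ)
    (hk2 : k ≤ Cmin (K1join H)) :
    adim (K1join H) k = adim H k := by
  obtain ⟨S, hS, hScard⟩ :=
    exists_isKAdjGen_card_eq_adim ⟨univ, isKAdjGen_univ_of_le_Cmin hk2⟩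
  have hT : IsKAdjGen H k S.toRight := IsKAdjGen.toRight (G := ⊥) hS
  obtain ⟨B, hB, hBcard⟩ := exists_isKAdjGen_card_eq_adim ⟨_, hT⟩
  have hB' : IsKAdjGen (K1join H) k (B.map .inr) :=
    hB.map_inr_K1join (hB.le_card_filter_d2_ne_one hgirth hdeg)
  apply le_antisymm
  · calc adim (K1join H) k ≤ #(B.map .inr) := adim_le_card hB'
      _ = adim H k := by rw [card_map, hBcard]
  · calc adim H k ≤ #S.toRight := adim_le_card hT
      _ ≤ #S := card_toRight_le
      _ = adim (K1join H) k := hScard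

/-- Corollary 4.5: for a connected graph `H` of girth at least `5` and minimum
degree at least `3`, and `1 ≤ k ≤ C(K₁ + H)`, `adim_k(K₁ + H) = adim_k(H)`. -/
theorem adim_K1join_eq_of_girth [Fintype W] (H : SimpleGraph W)
    [DecidableRel H.Adj] (hconn : H.Connected) (hgirth : 5 ≤ H.girth)
    (hdeg : ∀ v : W, 3 ≤ H.degree v) (k : ℕ)
    (hk1 : 1 ≤ k) (hk2 : k ≤ Cmin (K1join H)) :
    adim (K1join H) k = adim H k :=
  adim_K1join_eq_of_girth_general H hgirth hdeg k hk2

end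
end AdjDim
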